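/- arXiv:2010.06783 — 4 statements merged into one kernel-verified Lean document; each statement's English description precedes it below -/
import Mathlib

section
/- For every natural number n ≥ 1, the space E_n = {f : Fin n → ℝ | f is injective} has exactly n! path components; more precisely, the assignment sending a path component to the linear order it induces on Fin n gives a bijection between the set of path components of E_n and the set of permutations of Fin n. -/
section aux
variable {n : ℕ}

/-- uniqueness of sorting permutation for injective f -/
lemma sort_unique (f : Fin n → ℝ) (hf : Function.Injective f) (σ τ : Equiv.Perm (Fin n))
    (hσ : StrictMono (f ∘ σ)) (hτ : StrictMono (f ∘ τ)) : σ = τ := by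
  have h : f ∘ σ = f ∘ τ := Tuple.unique_monotone hσ.monotone hτ.monotone
  apply Equiv.ext
  intro i
  exact hf (congrFun h i)

lemma strictMono_sort (f : Fin n → ℝ) (hf : Function.Injective f) :
    StrictMono (f ∘ Tuple.sort f) :=
  (Tuple.monotone_sort f).strictMono_of_injective (hf.comp (Tuple.sort f).injective)

end aux

/-- For `n ≥ 1`, the space `E_n` of injective functions `Fin n → ℝ` has exactly `n!` path
components: the map sending an injective function `f` to the (unique) permutation `σ` with
`f ∘ σ` strictly increasing descends to a bijection from the set of path components of `E_n`
onto the permutations of `Fin n`; in particular the set of path components has cardinality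
`n!`. -/
theorem pathComponents_of_injective_functions (n : ℕ) (hn : 1 ≤ n) :
    ∃ Φ : {f : Fin n → ℝ // Function.Injective f} → Equiv.Perm (Fin n),
      (∀ f : {f : Fin n → ℝ // Function.Injective f}, StrictMono (f.1 ∘ ⇑(Φ f))) ∧
      (∀ f g : {f : Fin n → ℝ // Function.Injective f}, Joined f g ↔ Φ f = Φ g) ∧
      Function.Surjective Φ ∧
      Nonempty (ZerothHomotopy {f : Fin n → ℝ // Function.Injective f} ≃ Fin (Nat.factorial n)) := by
  set S := {f : Fin n → ℝ // Function.Injective f}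
  have key : ∀ f g : S, Joined f g → Tuple.sort f.1 = Tuple.sort g.1 := by
    rintro f g ⟨γ⟩
    have hord : ∀ i j : Fin n, f.1 i < f.1 j → g.1 i < g.1 j := by
      intro i j hij
      by_contra hgij
      have hgij' : g.1 j < g.1 i := lt_of_le_of_ne (not_lt.mp hgij)
        (fun h => (g.2 h ▸ hij).false)
      have hc : Continuous fun t : ℝ => (γ.extend t).1 j - (γ.extend t).1 i := by
        have hγ : Continuous fun t : ℝ => (γ.extend t).1 :=
          continuous_subtype_val.comp γ.continuous_extend
        exact ((continuous_apply j).comp hγ).sub ((continuous_apply i).comp hγ)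
      have h0 : (fun t : ℝ => (γ.extend t).1 j - (γ.extend t).1 i) 0 > 0 := by
        simp [γ.extend_zero]; linarith
      have h1 : (fun t : ℝ => (γ.extend t).1 j - (γ.extend t).1 i) 1 < 0 := by
        simp [γ.extend_one]; linarith
      obtain ⟨t, -, ht⟩ := intermediate_value_Icc' (zero_le_one) hc.continuousOn
        (Set.mem_Icc.mpr ⟨le_of_lt h1, le_of_lt h0⟩)
      have heq : (γ.extend t).1 j = (γ.extend t).1 i := by
        have : (γ.extend t).1 j - (γ.extend t).1 i = 0 := ht
        linarith
      have : j = i := (γ.extend t).2 heq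
      exact absurd (this ▸ hij) (lt_irrefl _)
    have hsm : StrictMono (g.1 ∘ Tuple.sort f.1) := fun a b hab =>
      hord _ _ (strictMono_sort f.1 f.2 hab)
    exact sort_unique g.1 g.2 _ _ hsm (strictMono_sort g.1 g.2)
  have line : ∀ f g : S, Tuple.sort f.1 = Tuple.sort g.1 → Joined f g := by
    intro f g h
    have hinj : ∀ t : unitInterval, Function.Injective
        fun i => (1 - (t:ℝ)) * f.1 i + (t:ℝ) * g.1 i := by
      intro t
      have hsm : StrictMono ((fun i => (1 - (t:ℝ)) * f.1 i + (t:ℝ) * g.1 i) ∘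
          ⇑(Tuple.sort f.1)) := by
        intro a b hab
        have h1 := strictMono_sort f.1 f.2 hab
        have h2 : g.1 (Tuple.sort f.1 a) < g.1 (Tuple.sort f.1 b) := by
          have h3 := strictMono_sort g.1 g.2
          rw [← h] at h3
          exact h3 hab
        simp only [Function.comp_apply] at h1 ⊢
        have ht0 : (0:ℝ) ≤ t := t.2.1
        have ht1 : (t:ℝ) ≤ 1 := t.2.2
        rcases eq_or_lt_of_le ht0 with h0 | h0
        · simp [← h0]; simpa using h1
        rcases eq_or_lt_of_le ht1 with h1' | h1'
        · simp [h1']; exact h2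
        · have := mul_lt_mul_of_pos_left h1 (by linarith : (0:ℝ) < 1 - t)
          have := mul_lt_mul_of_pos_left h2 h0
          linarith
      exact (Equiv.injective_comp (Tuple.sort f.1) _).mp hsm.injective
    refine ⟨⟨⟨fun t => ⟨fun i => (1 - (t:ℝ)) * f.1 i + (t:ℝ) * g.1 i, hinj t⟩, ?_⟩, ?_, ?_⟩⟩
    · apply Continuous.subtype_mk
      apply continuous_pi
      intro i
      exact ((continuous_const.sub continuous_subtype_val).mul continuous_const).add
        (continuous_subtype_val.mul continuous_const)
    · ext i; simp
    · ext i; simp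
  have hsurj : Function.Surjective (fun f : S => Tuple.sort f.1) := by
    intro σ
    refine ⟨⟨fun i => ((σ.symm i : Fin n) : ℝ), ?_⟩, ?_⟩
    · intro a b hab
      simp only at hab
      have : σ.symm a = σ.symm b := Fin.val_injective (by exact_mod_cast hab)
      exact σ.symm.injective this
    · have hsm : StrictMono ((fun i => ((σ.symm i : Fin n) : ℝ)) ∘ ⇑σ) := by
        intro a b hab
        simp only [Function.comp_apply, Equiv.symm_apply_apply]
        exact_mod_cast hab
      show Tuple.sort (fun i => ((σ.symm i : Fin n) : ℝ)) = σ
      refine (sort_unique _ ?_ _ _ (strictMono_sort _ ?_) hsm) <;>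
      · intro a b hab
        simp only at hab
        exact σ.symm.injective (Fin.val_injective (by exact_mod_cast hab))
  refine ⟨fun f => Tuple.sort f.1, fun f => strictMono_sort f.1 f.2,
    fun f g => ⟨key f g, line f g⟩, hsurj, ?_⟩
  have hbij : Function.Bijective
      (Quotient.lift (fun f : S => Tuple.sort f.1) (fun a b hab => key a b hab) :
        ZerothHomotopy S → Equiv.Perm (Fin n)) := by
    constructor
    · rintro ⟨a⟩ ⟨b⟩ hab
      exact Quotient.sound (line a b hab)
    · intro σ
      obtain ⟨f, hf⟩ := hsurj σ
      exact ⟨⟦f⟧, hf⟩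
  exact ⟨(Equiv.ofBijective _ hbij).trans
    (Fintype.equivFinOfCardEq (by simp [Fintype.card_perm]))⟩
end

section
/- Let n be a natural number. For every permutation σ of Fin n, the set {f : Fin n → ℝ | f ∘ σ is strictly increasing} is a convex subset of the space of functions Fin n → ℝ, and these sets, as σ ranges over all permutations, are precisely the path components of E_n = {f : Fin n → ℝ | f is injective}. In particular, every path component of E_n is convex and hence contractible. -/
open Set

private lemma Cset_subset_inj {n : ℕ} (σ : Equiv.Perm (Fin n)) {f : Fin n → ℝ}
    (hf : StrictMono (f ∘ ⇑σ)) : Function.Injective f := by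
  have h : f = (f ∘ ⇑σ) ∘ ⇑σ.symm := by
    funext i; simp
  rw [h]
  exact hf.injective.comp σ.symm.injective

private lemma Cset_convex {n : ℕ} (σ : Equiv.Perm (Fin n)) :
    Convex ℝ {f : Fin n → ℝ | StrictMono (f ∘ ⇑σ)} := by
  intro f hf g hg a b ha hb hab
  intro i j hij
  have h1 : f (σ i) < f (σ j) := hf hij
  have h2 : g (σ i) < g (σ j) := hg hij
  simp only [Function.comp_apply, Pi.add_apply, Pi.smul_apply, smul_eq_mul]
  rcases eq_or_lt_of_le ha with h | h
  · have hb1 : b = 1 := by linarith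
    simp [← h, hb1, h2]
  · have : a * f (σ i) < a * f (σ j) := by nlinarith
    have : b * g (σ i) ≤ b * g (σ j) := by nlinarith
    nlinarith

private lemma Cset_open {n : ℕ} (σ : Equiv.Perm (Fin n)) :
    IsOpen {f : Fin n → ℝ | StrictMono (f ∘ ⇑σ)} := by
  have h : {f : Fin n → ℝ | StrictMono (f ∘ ⇑σ)} =
      ⋂ (i : Fin n) (j : Fin n) (_ : i < j), {f : Fin n → ℝ | f (σ i) < f (σ j)} := by
    ext f
    simp only [Set.mem_setOf_eq, Set.mem_iInter, StrictMono, Function.comp_apply]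
  rw [h]
  exact isOpen_iInter_of_finite fun i => isOpen_iInter_of_finite fun j =>
    isOpen_iInter_of_finite fun _ =>
      isOpen_lt (continuous_apply (σ i)) (continuous_apply (σ j))

private lemma Cset_unique {n : ℕ} {σ τ : Equiv.Perm (Fin n)} {f : Fin n → ℝ}
    (hσ : StrictMono (f ∘ ⇑σ)) (hτ : StrictMono (f ∘ ⇑τ)) : σ = τ := by
  set π : Equiv.Perm (Fin n) := τ.trans σ.symm with hπdef
  have hπ : StrictMono ⇑π := by
    intro i j hij
    have : (f ∘ ⇑σ) (π i) < (f ∘ ⇑σ) (π j) := by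
      simpa [hπdef, Function.comp] using hτ hij
    exact hσ.lt_iff_lt.mp this
  have hid : ⇑π = id := by
    rw [← StrictMono.coe_orderIsoOfSurjective ⇑π hπ π.surjective,
      Subsingleton.elim (StrictMono.orderIsoOfSurjective ⇑π hπ π.surjective)
        (OrderIso.refl (Fin n))]
    rfl
  apply Equiv.ext
  intro x
  have := congrFun hid x
  simp only [hπdef, Equiv.trans_apply, id_eq] at this
  calc σ x = σ (σ.symm (τ x)) := by rw [this]
    _ = τ x := σ.apply_symm_apply _

private lemma Cset_exists {n : ℕ} {f : Fin n → ℝ} (hf : Function.Injective f) :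
    ∃ σ : Equiv.Perm (Fin n), StrictMono (f ∘ ⇑σ) :=
  ⟨Tuple.sort f, (Tuple.monotone_sort f).strictMono_of_injective
    (hf.comp (Tuple.sort f).injective)⟩

private lemma Cset_eq_pathComponentIn {n : ℕ} (σ : Equiv.Perm (Fin n)) {f : Fin n → ℝ}
    (hf : StrictMono (f ∘ ⇑σ)) :
    pathComponentIn {g : Fin n → ℝ | Function.Injective g} f
      = {g : Fin n → ℝ | StrictMono (g ∘ ⇑σ)} := by
  set E : Set (Fin n → ℝ) := {g : Fin n → ℝ | Function.Injective g} with hE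
  set C : Set (Fin n → ℝ) := {g : Fin n → ℝ | StrictMono (g ∘ ⇑σ)} with hC
  have hCE : C ⊆ E := fun g hg => Cset_subset_inj σ hg
  apply Subset.antisymm
  · intro g hg
    obtain ⟨γ, hγ⟩ : JoinedIn E f g := hg
    set U : Set unitInterval := ⇑γ ⁻¹' C with hU
    have hUopen : IsOpen U := (Cset_open σ).preimage γ.continuous
    have hUclosed : IsClosed U := by
      have hcompl : Uᶜ = ⇑γ ⁻¹' (⋃ (τ : Equiv.Perm (Fin n)) (_ : τ ≠ σ),
          {g : Fin n → ℝ | StrictMono (g ∘ ⇑τ)}) := by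
        ext t
        simp only [Set.mem_compl_iff, Set.mem_preimage, Set.mem_iUnion, hU]
        constructor
        · intro ht
          obtain ⟨τ, hτ⟩ := Cset_exists (hγ t)
          exact ⟨τ, fun h => ht (by subst h; exact hτ), hτ⟩
        · rintro ⟨τ, hτσ, hτ⟩ hmem
          exact hτσ (Cset_unique hτ hmem)
      rw [← isOpen_compl_iff, hcompl]
      exact (isOpen_iUnion fun τ => isOpen_iUnion fun _ => Cset_open τ).preimage γ.continuous
    have hne : U.Nonempty := ⟨0, by simp only [hU, Set.mem_preimage, γ.source]; exact hf⟩
    have : U = Set.univ := (IsClopen.eq_univ ⟨hUclosed, hUopen⟩ hne)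
    have h1 : (1 : unitInterval) ∈ U := this ▸ Set.mem_univ _
    simpa [hU, γ.target] using h1
  · exact ((Cset_convex σ).isPathConnected ⟨f, hf⟩).subset_pathComponentIn hf hCE

/-- For each permutation `σ` of `Fin n`, the set of functions `f : Fin n → ℝ` with `f ∘ σ`
strictly increasing is convex, and these sets, as `σ` ranges over all permutations, are
precisely the path components of the space `E_n` of injective functions `Fin n → ℝ`.
In particular, every path component of `E_n` is convex, hence contractible. -/
theorem pathComponents_are_convex (n : ℕ) :
    (∀ σ : Equiv.Perm (Fin n), Convex ℝ {f : Fin n → ℝ | StrictMono (f ∘ ⇑σ)}) ∧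
      {S : Set (Fin n → ℝ) | ∃ σ : Equiv.Perm (Fin n), S = {f : Fin n → ℝ | StrictMono (f ∘ ⇑σ)}} =
        {S : Set (Fin n → ℝ) | ∃ f ∈ {f : Fin n → ℝ | Function.Injective f},
          S = pathComponentIn {f : Fin n → ℝ | Function.Injective f} f} := by
  refine ⟨Cset_convex, ?_⟩
  ext S
  simp only [Set.mem_setOf_eq]
  constructor
  · rintro ⟨σ, rfl⟩
    set f₀ : Fin n → ℝ := fun i => ((σ.symm i : ℕ) : ℝ) with hf₀
    have hmono : StrictMono (f₀ ∘ ⇑σ) := by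
      intro i j hij
      simp only [hf₀, Function.comp_apply, Equiv.symm_apply_apply]
      exact_mod_cast hij
    exact ⟨f₀, Cset_subset_inj σ hmono, (Cset_eq_pathComponentIn σ hmono).symm⟩
  · rintro ⟨f, hf, rfl⟩
    obtain ⟨σ, hσ⟩ := Cset_exists hf
    exact ⟨σ, Cset_eq_pathComponentIn σ hσ⟩
end

section
/- For every natural number n ≥ 1, the space E_n = {f : Fin n → ℝ | f is injective} is homotopy equivalent to the discrete topological space with n! points. -/
namespace InjHE

variable {n : ℕ}

/-- The space of injective tuples. -/
abbrev E (n : ℕ) := {f : Fin n → ℝ // Function.Injective f}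

/-- Canonical representative for the component indexed by `σ`. -/
def canon (σ : Equiv.Perm (Fin n)) : Fin n → ℝ := fun i => ((σ.symm i : Fin n) : ℕ)

lemma canon_strictMono (σ : Equiv.Perm (Fin n)) : StrictMono (canon σ ∘ σ) := by
  intro i j hij
  simp only [canon, Function.comp_apply, Equiv.symm_apply_apply]
  exact_mod_cast hij

lemma inj_of_strictMono {σ : Equiv.Perm (Fin n)} {g : Fin n → ℝ}
    (h : StrictMono (g ∘ σ)) : Function.Injective g := by
  intro a b hab
  have h2 : σ.symm a = σ.symm b := h.injective (by simpa using hab)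
  simpa using congrArg σ h2

lemma sort_eq_of_strictMono {f : Fin n → ℝ} {σ : Equiv.Perm (Fin n)}
    (h : StrictMono (f ∘ σ)) : Tuple.sort f = σ := by
  symm
  rw [Tuple.eq_sort_iff]
  exact ⟨h.monotone, fun i j hij hf => absurd hf (h hij).ne⟩

lemma strictMono_sort {f : Fin n → ℝ} (hf : Function.Injective f) :
    StrictMono (f ∘ Tuple.sort f) :=
  (Tuple.monotone_sort f).strictMono_of_injective (hf.comp (Equiv.injective _))

lemma mix_strictMono {σ : Equiv.Perm (Fin n)} {g h : Fin n → ℝ}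
    (hg : StrictMono (g ∘ σ)) (hh : StrictMono (h ∘ σ)) {t : ℝ}
    (ht0 : 0 ≤ t) (ht1 : t ≤ 1) :
    StrictMono (((1 - t) • g + t • h) ∘ σ) := by
  intro i j hij
  have h1 := hg hij
  have h2 := hh hij
  simp only [Function.comp_apply, Pi.add_apply, Pi.smul_apply, smul_eq_mul] at *
  rcases eq_or_lt_of_le ht0 with h0 | h0
  · rw [← h0]; simpa using h1
  · have hb := mul_lt_mul_of_pos_left h2 h0
    have ha := mul_le_mul_of_nonneg_left h1.le (by linarith : (0:ℝ) ≤ 1 - t)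
    linarith

/-- The (open) piece of `E n` where `f ∘ σ` is strictly monotone. -/
def Uset (σ : Equiv.Perm (Fin n)) : Set (E n) := {f | StrictMono (f.1 ∘ σ)}

lemma isOpen_Uset (σ : Equiv.Perm (Fin n)) : IsOpen (Uset σ) := by
  have : Uset σ = ⋂ p : {p : Fin n × Fin n // p.1 < p.2},
      {f : E n | f.1 (σ p.1.1) < f.1 (σ p.1.2)} := by
    ext f
    simp only [Uset, Set.mem_iInter, Set.mem_setOf_eq]
    exact ⟨fun h p => h p.2, fun h i j hij => h ⟨(i, j), hij⟩⟩
  rw [this]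
  exact isOpen_iInter_of_finite fun p =>
    isOpen_lt ((continuous_apply _).comp continuous_subtype_val)
      ((continuous_apply _).comp continuous_subtype_val)

lemma lc : IsLocallyConstant (fun f : E n => Tuple.sort f.1) := by
  intro s
  have : (fun f : E n => Tuple.sort f.1) ⁻¹' s = ⋃ σ ∈ s, Uset σ := by
    ext f
    simp only [Set.mem_preimage, Set.mem_iUnion]
    constructor
    · intro h
      exact ⟨_, h, strictMono_sort f.2⟩
    · rintro ⟨σ, hσ, hf⟩
      rwa [sort_eq_of_strictMono hf]
  rw [this]
  exact isOpen_biUnion fun σ _ => isOpen_Uset σ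

end InjHE

open InjHE in
/-- For `n ≥ 1`, the space of injective functions `Fin n → ℝ` is homotopy equivalent to the
discrete space with `n!` points. -/
theorem injective_functions_homotopyEquiv_discrete (n : ℕ) (hn : 1 ≤ n) :
    Nonempty
      (ContinuousMap.HomotopyEquiv {f : Fin n → ℝ // Function.Injective f}
        (Fin (Nat.factorial n))) := by
  classical
  let e : Equiv.Perm (Fin n) ≃ Fin (Nat.factorial n) :=
    Fintype.equivFinOfCardEq (by simp [Fintype.card_perm])
  let φ : C(E n, Fin (Nat.factorial n)) :=
    ⟨fun f => e (Tuple.sort f.1), (lc.comp e).continuous⟩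
  let ψ : C(Fin (Nat.factorial n), E n) :=
    ⟨fun k => ⟨canon (e.symm k), inj_of_strictMono (canon_strictMono (e.symm k))⟩,
      continuous_of_discreteTopology⟩
  -- the straight-line homotopy
  have hmix : ∀ p : unitInterval × E n,
      Function.Injective
        ((1 - (p.1 : ℝ)) • canon (Tuple.sort p.2.1) + (p.1 : ℝ) • p.2.1) := by
    rintro ⟨t, f⟩
    exact inj_of_strictMono
      (mix_strictMono (canon_strictMono _) (strictMono_sort f.2) t.2.1 t.2.2)
  have hcont : Continuous fun p : unitInterval × E n =>
      ((1 - (p.1 : ℝ)) • canon (Tuple.sort p.2.1) + (p.1 : ℝ) • (p.2.1 : Fin n → ℝ)) := by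
    rw [continuous_iff_continuousAt]
    rintro ⟨t, f⟩
    have hmem : (Set.univ ×ˢ Uset (Tuple.sort f.1)) ∈ nhds (t, f) :=
      (isOpen_univ.prod (isOpen_Uset _)).mem_nhds ⟨trivial, strictMono_sort f.2⟩
    have hev : ∀ᶠ p : unitInterval × E n in nhds (t, f),
        Tuple.sort p.2.1 = Tuple.sort f.1 :=
      Filter.eventually_of_mem hmem fun p hp => sort_eq_of_strictMono hp.2
    have hcoe : Continuous fun p : unitInterval × E n => (p.1 : ℝ) :=
      continuous_subtype_val.comp continuous_fst
    have hval : Continuous fun p : unitInterval × E n => (p.2.1 : Fin n → ℝ) :=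
      continuous_subtype_val.comp continuous_snd
    have hc2 : Continuous fun p : unitInterval × E n =>
        ((1 - (p.1 : ℝ)) • canon (Tuple.sort f.1) + (p.1 : ℝ) • (p.2.1 : Fin n → ℝ)) :=
      ((continuous_const.sub hcoe).smul continuous_const).add (hcoe.smul hval)
    exact hc2.continuousAt.congr (hev.mono fun p hp => by simp only [hp])
  let H : ContinuousMap.Homotopy (ψ.comp φ) (ContinuousMap.id (E n)) :=
    { toFun := fun p => ⟨_, hmix p⟩
      continuous_toFun := hcont.subtype_mk _
      map_zero_left := by
        intro f
        apply Subtype.ext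
        simp [φ, ψ, ContinuousMap.comp]
      map_one_left := by
        intro f
        apply Subtype.ext
        simp }
  refine ⟨⟨φ, ψ, ⟨H⟩, ?_⟩⟩
  have : φ.comp ψ = ContinuousMap.id _ := by
    ext k
    have hs : Tuple.sort (canon (e.symm k)) = e.symm k :=
      sort_eq_of_strictMono (canon_strictMono (e.symm k))
    show (e (Tuple.sort (canon (e.symm k))) : ℕ) = (k : ℕ)
    rw [hs, Equiv.apply_symm_apply]
  rw [this]
end

section
/- For every natural number d ≥ 2, the one-point compactification of the monotone cone H_d = {x : Fin d → ℝ | x_1 ≤ x_2 ≤ ⋯ ≤ x_d} is homeomorphic to the closed unit ball in d-dimensional Euclidean space. -/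
local notation "ℝ≥" => {t : ℝ // 0 ≤ t}


noncomputable def quadrantHomeo : (ℝ≥ × ℝ≥) ≃ₜ (ℝ × ℝ≥) where
  toFun p := (p.1.1 ^ 2 - p.2.1 ^ 2,
    ⟨2 * p.1.1 * p.2.1, by have h1 := p.1.2; have h2 := p.2.2; positivity⟩)
  invFun q := ⟨⟨Real.sqrt ((Real.sqrt (q.1 ^ 2 + q.2.1 ^ 2) + q.1) / 2), Real.sqrt_nonneg _⟩,
    ⟨Real.sqrt ((Real.sqrt (q.1 ^ 2 + q.2.1 ^ 2) - q.1) / 2), Real.sqrt_nonneg _⟩⟩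
  left_inv := by
    rintro ⟨⟨u, hu⟩, ⟨v, hv⟩⟩
    have key : (u ^ 2 - v ^ 2) ^ 2 + (2 * u * v) ^ 2 = (u ^ 2 + v ^ 2) ^ 2 := by ring
    have h1 : Real.sqrt ((u ^ 2 - v ^ 2) ^ 2 + (2 * u * v) ^ 2) = u ^ 2 + v ^ 2 := by
      rw [key]; exact Real.sqrt_sq (by positivity)
    have e1 : (u ^ 2 + v ^ 2 + (u ^ 2 - v ^ 2)) / 2 = u ^ 2 := by ring
    have e2 : (u ^ 2 + v ^ 2 - (u ^ 2 - v ^ 2)) / 2 = v ^ 2 := by ring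
    simp only [Prod.ext_iff, Subtype.ext_iff]
    constructor
    · rw [h1, e1, Real.sqrt_sq hu]
    · rw [h1, e2, Real.sqrt_sq hv]
  right_inv := by
    rintro ⟨a, ⟨b, hb⟩⟩
    set r := Real.sqrt (a ^ 2 + b ^ 2) with hr
    have hr2 : r ^ 2 = a ^ 2 + b ^ 2 := Real.sq_sqrt (by positivity)
    have habs : |a| ≤ r := by
      rw [hr, ← Real.sqrt_sq_eq_abs]
      exact Real.sqrt_le_sqrt (by nlinarith [sq_nonneg b])
    have h1 : (0:ℝ) ≤ (r + a) / 2 := by have := abs_le.mp (le_abs_self a |>.trans habs |> fun _ => habs) ; have := neg_abs_le a; linarith [habs, neg_abs_le a, le_abs_self a]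
    have h2 : (0:ℝ) ≤ (r - a) / 2 := by linarith [le_abs_self a, habs]
    have hprod : (r + a) / 2 * ((r - a) / 2) = (b / 2) ^ 2 := by linear_combination hr2 / 4
    simp only [Prod.ext_iff, Subtype.ext_iff]
    constructor
    · rw [Real.sq_sqrt h1, Real.sq_sqrt h2]; ring
    · rw [mul_assoc, ← Real.sqrt_mul h1, hprod, Real.sqrt_sq (by linarith)]; ring
  continuous_toFun := by
    refine Continuous.prodMk ?_ (Continuous.subtype_mk ?_ _)
    · fun_prop
    · fun_prop
  continuous_invFun := by
    refine Continuous.prodMk (Continuous.subtype_mk ?_ _) (Continuous.subtype_mk ?_ _) <;>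
      fun_prop


def homeoPiFinSucc (n : ℕ) (X : Type*) [TopologicalSpace X] :
    (Fin (n + 1) → X) ≃ₜ X × (Fin n → X) where
  toFun f := (f 0, fun i => f i.succ)
  invFun q := Fin.cons q.1 q.2
  left_inv f := by
    funext i
    induction i using Fin.cases with
    | zero => simp
    | succ j => simp
  right_inv q := by simp
  continuous_toFun := (continuous_apply 0).prodMk (continuous_pi fun i => continuous_apply _)
  continuous_invFun := continuous_pi fun i => by
    induction i using Fin.cases with
    | zero => simpa using continuous_fst
    | succ j => simp only [Fin.cons_succ]; exact (continuous_apply j).comp continuous_snd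

def stepFun (n : ℕ) (v : Fin n → {t : ℝ // 0 ≤ t}) (j : ℕ) : ℝ :=
  if h : j < n then (v ⟨j, h⟩ : ℝ) else 0

lemma stepFun_nonneg (n : ℕ) (v : Fin n → {t : ℝ // 0 ≤ t}) (j : ℕ) : 0 ≤ stepFun n v j := by
  unfold stepFun; split
  · exact (v _).2
  · exact le_rfl

noncomputable def coneHomeo (n : ℕ) :
    {x : Fin (n + 1) → ℝ // Monotone x} ≃ₜ ℝ × (Fin n → {t : ℝ // 0 ≤ t}) where
  toFun x := (x.1 0, fun i => ⟨x.1 i.succ - x.1 i.castSucc,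
    sub_nonneg.2 (x.2 (Fin.castSucc_lt_succ (i := i)).le)⟩)
  invFun q := ⟨fun i => q.1 + ∑ j ∈ Finset.range (i : ℕ), stepFun n q.2 j, by
    intro i i' hii'
    refine add_le_add_right (Finset.sum_le_sum_of_subset_of_nonneg
      (Finset.range_subset_range.2 hii') fun j _ _ => stepFun_nonneg n q.2 j) _⟩
  left_inv := by
    rintro ⟨x, hx⟩
    have claim : ∀ (k : ℕ) (hk : k < n + 1),
        x 0 + ∑ j ∈ Finset.range k, stepFun n
          (fun i => ⟨x i.succ - x i.castSucc, sub_nonneg.2 (hx (Fin.castSucc_lt_succ (i := i)).le)⟩) j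
          = x ⟨k, hk⟩ := by
      intro k
      induction k with
      | zero => intro hk; simp
      | succ k ih =>
        intro hk
        have hkn : k < n := by omega
        rw [Finset.sum_range_succ, ← add_assoc, ih (by omega)]
        simp only [stepFun, dif_pos hkn, Fin.succ_mk, Fin.castSucc_mk]
        ring_nf
    ext i
    simpa [Fin.eta] using claim i.1 i.2
  right_inv := by
    rintro ⟨a, v⟩
    refine Prod.ext ?_ ?_
    · simp
    · funext i
      ext
      simp only [Fin.val_succ, Fin.coe_castSucc, Finset.sum_range_succ]
      have : stepFun n v i.1 = v i := by simp [stepFun, i.isLt]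
      rw [this]; ring
  continuous_toFun := by
    have hc : Continuous fun x : {x : Fin (n+1) → ℝ // Monotone x} => x.1 :=
      continuous_subtype_val
    refine Continuous.prodMk ((continuous_apply 0).comp hc)
      (continuous_pi fun i => Continuous.subtype_mk ?_ _)
    exact ((continuous_apply i.succ).comp hc).sub ((continuous_apply i.castSucc).comp hc)
  continuous_invFun := by
    refine Continuous.subtype_mk (continuous_pi fun i => Continuous.add continuous_fst ?_) _
    refine continuous_finset_sum _ fun j _ => ?_
    rcases Nat.lt_or_ge j n with h | h
    · simp only [stepFun, dif_pos h]
      exact continuous_subtype_val.comp ((continuous_apply _).comp continuous_snd)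
    · simp only [stepFun, dif_neg (by omega : ¬ j < n)]
      exact continuous_const


open Metric in
noncomputable def inversionHomeo {E : Type*} [NormedAddCommGroup E] [InnerProductSpace ℝ E]
    (p : E) (hp : ‖p‖ = 1) (hmem : p ∈ closedBall (0 : E) 1) :
    {y : E // inner ℝ y p ≤ -(1/2 : ℝ)} ≃ₜ
      {z : (closedBall (0 : E) 1) // z ≠ ⟨p, hmem⟩} where
  toFun y := by
    refine ⟨⟨p + (‖y.1‖ ^ 2)⁻¹ • y.1, ?_⟩, ?_⟩
    · have hy := y.2
      have hy0 : y.1 ≠ 0 := by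
        intro h; rw [h] at hy; simp at hy; linarith
      have hn : (0:ℝ) < ‖y.1‖ ^ 2 := pow_pos (norm_pos_iff.mpr hy0) 2
      have hnorm : ‖p + (‖y.1‖ ^ 2)⁻¹ • y.1‖ ^ 2 ≤ 1 := by
        rw [norm_add_sq_real, norm_smul, real_inner_smul_right, hp]
        have h1 : ‖(‖y.1‖ ^ 2)⁻¹‖ = (‖y.1‖ ^ 2)⁻¹ := by
          rw [Real.norm_eq_abs, abs_of_pos (by positivity)]
        rw [h1]
        have h2 : ((‖y.1‖ ^ 2)⁻¹ * ‖y.1‖) ^ 2 = (‖y.1‖ ^ 2)⁻¹ := by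
          field_simp
        rw [h2]
        have hip : inner ℝ p y.1 = (inner ℝ y.1 p : ℝ) := real_inner_comm _ _
        rw [hip]
        have h3 : (‖y.1‖ ^ 2)⁻¹ * (2 * inner ℝ y.1 p + 1) ≤ 0 := by
          apply mul_nonpos_of_nonneg_of_nonpos (le_of_lt (by positivity))
          linarith
        nlinarith [h3]
      simp only [mem_closedBall, dist_zero_right]
      nlinarith [norm_nonneg (p + (‖y.1‖ ^ 2)⁻¹ • y.1)]
    · intro h
      have hy := y.2
      have hy0 : y.1 ≠ 0 := by
        intro h'; rw [h'] at hy; simp at hy; linarith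
      have h1 : p + (‖y.1‖ ^ 2)⁻¹ • y.1 = p := congrArg Subtype.val h
      have h2 : (‖y.1‖ ^ 2)⁻¹ • y.1 = 0 := left_eq_add.mp h1.symm
      rcases smul_eq_zero.mp h2 with h3 | h3
      · exact absurd h3 (inv_ne_zero (pow_ne_zero 2 (norm_ne_zero_iff.mpr hy0)))
      · exact hy0 h3
  invFun z := by
    refine ⟨(‖z.1.1 - p‖ ^ 2)⁻¹ • (z.1.1 - p), ?_⟩
    have hzp : z.1.1 - p ≠ 0 := sub_ne_zero.2 fun h => z.2 (Subtype.ext h)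
    have hn : (0:ℝ) < ‖z.1.1 - p‖ ^ 2 := pow_pos (norm_pos_iff.mpr hzp) 2
    have hball : ‖z.1.1‖ ≤ 1 := mem_closedBall_zero_iff.mp z.1.2
    rw [real_inner_smul_left]
    have hpp : ‖p‖ ^ 2 = 1 := by rw [hp]; norm_num
    have hsub : ‖z.1.1 - p‖ ^ 2 = ‖z.1.1‖ ^ 2 - 2 * inner ℝ z.1.1 p + ‖p‖ ^ 2 :=
      norm_sub_sq_real _ _
    have hip : (inner ℝ (z.1.1 - p) p : ℝ) = inner ℝ z.1.1 p - 1 := by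
      rw [inner_sub_left, real_inner_self_eq_norm_sq, hpp]
    have h₁ : (inner ℝ (z.1.1 - p) p : ℝ) ≤ -(1/2) * ‖z.1.1 - p‖ ^ 2 := by
      rw [hip]; nlinarith [hsub, hpp, hball, norm_nonneg z.1.1]
    calc (‖z.1.1 - p‖ ^ 2)⁻¹ * inner ℝ (z.1.1 - p) p
        ≤ (‖z.1.1 - p‖ ^ 2)⁻¹ * (-(1/2) * ‖z.1.1 - p‖ ^ 2) :=
          mul_le_mul_of_nonneg_left h₁ (le_of_lt (inv_pos.2 hn))
      _ = -(1/2) := by field_simp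
  left_inv := by
    rintro ⟨y, hy⟩
    have hy0 : y ≠ 0 := by
      intro h'; rw [h'] at hy; simp at hy; linarith
    have hn : (0:ℝ) < ‖y‖ ^ 2 := pow_pos (norm_pos_iff.mpr hy0) 2
    ext
    simp only
    rw [add_sub_cancel_left, norm_smul, Real.norm_eq_abs,
      abs_of_pos (by positivity : (0:ℝ) < (‖y‖ ^ 2)⁻¹), mul_pow, smul_smul]
    have hc : (((‖y‖ ^ 2)⁻¹) ^ 2 * ‖y‖ ^ 2)⁻¹ * (‖y‖ ^ 2)⁻¹ = 1 := by
      field_simp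
    rw [hc, one_smul]
  right_inv := by
    rintro ⟨⟨z, hz⟩, hzp⟩
    have hzp' : z - p ≠ 0 := sub_ne_zero.2 fun h => hzp (Subtype.ext h)
    have hn : (0:ℝ) < ‖z - p‖ ^ 2 := pow_pos (norm_pos_iff.mpr hzp') 2
    ext
    simp only
    rw [norm_smul, Real.norm_eq_abs,
      abs_of_pos (by positivity : (0:ℝ) < (‖z - p‖ ^ 2)⁻¹), mul_pow, smul_smul]
    have hc : (((‖z - p‖ ^ 2)⁻¹) ^ 2 * ‖z - p‖ ^ 2)⁻¹ * (‖z - p‖ ^ 2)⁻¹ = 1 := by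
      field_simp
    rw [hc, one_smul, add_sub_cancel]
  continuous_toFun := by
    have hval : Continuous fun y : {y : E // inner ℝ y p ≤ -(1/2 : ℝ)} => y.1 :=
      continuous_subtype_val
    have hne : ∀ y : {y : E // inner ℝ y p ≤ -(1/2 : ℝ)}, ‖y.1‖ ^ 2 ≠ 0 := by
      intro y
      have hy := y.2
      have hy0 : y.1 ≠ 0 := by intro h'; rw [h'] at hy; simp at hy; linarith
      exact pow_ne_zero 2 (norm_ne_zero_iff.mpr hy0)
    refine Continuous.subtype_mk (Continuous.subtype_mk ?_ _) _
    exact continuous_const.add (((hval.norm.pow 2).inv₀ hne).smul hval)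
  continuous_invFun := by
    have hval : Continuous fun z : {z : (closedBall (0 : E) 1) // z ≠ ⟨p, hmem⟩} =>
        z.1.1 := continuous_subtype_val.comp continuous_subtype_val
    have hsub : Continuous fun z : {z : (closedBall (0 : E) 1) // z ≠ ⟨p, hmem⟩} =>
        z.1.1 - p := hval.sub continuous_const
    have hne : ∀ z : {z : (closedBall (0 : E) 1) // z ≠ ⟨p, hmem⟩},
        ‖z.1.1 - p‖ ^ 2 ≠ 0 := by
      intro z
      have : z.1.1 - p ≠ 0 := sub_ne_zero.2 fun h => z.2 (Subtype.ext h)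
      exact pow_ne_zero 2 (norm_ne_zero_iff.mpr this)
    exact Continuous.subtype_mk (((hsub.norm.pow 2).inv₀ hne).smul hsub) _


noncomputable def prodNHomeo : ∀ n : ℕ, (ℝ × (Fin (n + 1) → ℝ≥)) ≃ₜ ((Fin (n + 1) → ℝ) × ℝ≥)
  | 0 =>
    ((Homeomorph.refl ℝ).prodCongr (Homeomorph.funUnique (Fin 1) ℝ≥)).trans
      ((Homeomorph.funUnique (Fin 1) ℝ).symm.prodCongr (Homeomorph.refl ℝ≥))
  | (n + 1) =>
    -- ℝ × (Fin (n+2) → ℝ≥) ≃ ℝ × (ℝ≥ × F) ≃ (ℝ × ℝ≥) × F ≃ (ℝ≥ × ℝ) × F ≃ ℝ≥ × (ℝ × F)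
    -- ≃ ℝ≥ × (G × ℝ≥) ≃ (ℝ≥ × G) × ℝ≥ ≃ (G × ℝ≥) × ℝ≥ ≃ G × (ℝ≥ × ℝ≥) ≃ G × (ℝ × ℝ≥)
    -- ≃ (G × ℝ) × ℝ≥ ≃ (ℝ × G) × ℝ≥ ≃ (Fin (n+2) → ℝ) × ℝ≥
    (((Homeomorph.refl ℝ).prodCongr (homeoPiFinSucc (n + 1) ℝ≥)).trans
      ((Homeomorph.prodAssoc ℝ ℝ≥ _).symm.trans
      (((Homeomorph.prodComm ℝ ℝ≥).prodCongr (Homeomorph.refl _)).trans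
      ((Homeomorph.prodAssoc ℝ≥ ℝ _).trans
      (((Homeomorph.refl ℝ≥).prodCongr (prodNHomeo n)).trans
      ((Homeomorph.prodAssoc ℝ≥ _ ℝ≥).symm.trans
      (((Homeomorph.prodComm ℝ≥ _).prodCongr (Homeomorph.refl ℝ≥)).trans
      ((Homeomorph.prodAssoc _ ℝ≥ ℝ≥).trans
      (((Homeomorph.refl _).prodCongr quadrantHomeo).trans
      ((Homeomorph.prodAssoc _ ℝ ℝ≥).symm.trans
      (((Homeomorph.prodComm _ ℝ).prodCongr (Homeomorph.refl ℝ≥)).trans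
      (((homeoPiFinSucc (n + 1) ℝ).symm).prodCongr (Homeomorph.refl ℝ≥)))))))))))))

noncomputable def shiftHomeo (n : ℕ) :
    ((Fin (n + 1) → ℝ) × ℝ≥) ≃ₜ {y : Fin (n + 2) → ℝ // 1/2 ≤ y 0} where
  toFun q := ⟨Fin.cons (1/2 + q.2.1) q.1, by simpa using q.2.2⟩
  invFun y := (fun j => y.1 j.succ, ⟨y.1 0 - 1/2, by linarith [y.2]⟩)
  left_inv q := by
    refine Prod.ext (funext fun j => ?_) (Subtype.ext ?_)
    · simp
    · simp
  right_inv y := by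
    ext i
    induction i using Fin.cases with
    | zero => simp
    | succ j => simp
  continuous_toFun := by
    refine Continuous.subtype_mk (continuous_pi fun i => ?_) _
    induction i using Fin.cases with
    | zero =>
      simp only [Fin.cons_zero]; exact continuous_const.add (continuous_subtype_val.comp continuous_snd)
    | succ j => simp only [Fin.cons_succ]; exact (continuous_apply j).comp continuous_fst
  continuous_invFun := by
    refine Continuous.prodMk (continuous_pi fun j => ?_) (Continuous.subtype_mk ?_ _)
    · exact (continuous_apply _).comp continuous_subtype_val
    · exact ((continuous_apply _).comp continuous_subtype_val).sub continuous_const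


open Metric in
noncomputable def euclidTransfer (n : ℕ) :
    {y : Fin (n + 2) → ℝ // 1/2 ≤ y 0} ≃ₜ
      {y : EuclideanSpace ℝ (Fin (n + 2)) //
        inner ℝ y (-(EuclideanSpace.single 0 (1:ℝ))) ≤ -(1/2 : ℝ)} := by
  refine (EuclideanSpace.equiv (Fin (n + 2)) ℝ).toHomeomorph.symm.subtype fun x => ?_
  have : (inner ℝ ((EuclideanSpace.equiv (Fin (n + 2)) ℝ).toHomeomorph.symm x)
      (-(EuclideanSpace.single 0 (1:ℝ))) : ℝ) = -(x 0) := by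
    rw [inner_neg_right, EuclideanSpace.inner_single_right]
    simp [EuclideanSpace.equiv]
  rw [this]
  constructor <;> intro h <;> linarith

open Topology

/-- For `d ≥ 2`, the one-point compactification of the monotone cone
`{x : Fin d → ℝ | x₁ ≤ x₂ ≤ ⋯ ≤ x_d}` is homeomorphic to the closed unit ball in
`d`-dimensional Euclidean space. -/
theorem onePoint_monotone_cone_homeomorph_ball (d : ℕ) (hd : 2 ≤ d) :
    Nonempty
      (OnePoint {x : Fin d → ℝ // Monotone x} ≃ₜ
        (Metric.closedBall (0 : EuclideanSpace ℝ (Fin d)) 1)) := by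
  obtain ⟨n, rfl⟩ : ∃ n, d = n + 2 := ⟨d - 2, by omega⟩
  set p : EuclideanSpace ℝ (Fin (n + 2)) := -(EuclideanSpace.single 0 (1:ℝ)) with hpdef
  have hp : ‖p‖ = 1 := by simp [hpdef, EuclideanSpace.norm_single]
  have hmem : p ∈ Metric.closedBall (0 : EuclideanSpace ℝ (Fin (n + 2))) 1 := by
    simp [Metric.mem_closedBall, hpdef, EuclideanSpace.norm_single]
  have : CompactSpace (Metric.closedBall (0 : EuclideanSpace ℝ (Fin (n + 2))) 1) :=
    isCompact_iff_compactSpace.mp (isCompact_closedBall _ _)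
  let bigE : {x : Fin (n + 2) → ℝ // Monotone x} ≃ₜ
      {z : (Metric.closedBall (0 : EuclideanSpace ℝ (Fin (n + 2))) 1) // z ≠ ⟨p, hmem⟩} :=
    (coneHomeo (n + 1)).trans ((prodNHomeo n).trans ((shiftHomeo n).trans
      ((euclidTransfer n).trans (inversionHomeo p hp hmem))))
  have hf : IsEmbedding ((Subtype.val) ∘ bigE) :=
    IsEmbedding.subtypeVal.comp bigE.isEmbedding
  have hrange : Set.range ((Subtype.val) ∘ bigE) = {(⟨p, hmem⟩ : Metric.closedBall (0 : EuclideanSpace ℝ (Fin (n + 2))) 1)}ᶜ := by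
    rw [Set.range_comp, bigE.surjective.range_eq, Set.image_univ,
      Subtype.range_coe_subtype]
    ext z
    simp
  exact ⟨OnePoint.equivOfIsEmbeddingOfRangeEq ⟨p, hmem⟩ _ hf hrange⟩
end
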